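/- Let R be a commutative ring and u, v, x, y ∈ R. Then the radical of the ideal (xu, yv, xv + yu) equals the radical of the product ideal (u,v)(x,y), which also equals the radical of the intersection (u,v) ∩ (x,y). -/
import Mathlib

/-- For elements `u, v, x, y` of a commutative ring, the radical of `(xu, yv, xv + yu)`
equals the radical of `(u,v)(x,y)`, which equals the radical of `(u,v) ∩ (x,y)`. -/
theorem radical_span_eq_radical_mul_eq_radical_inf
    {R : Type*} [CommRing R] (u v x y : R) :
    (Ideal.span {x * u, y * v, x * v + y * u}).radical =
        (Ideal.span {u, v} * Ideal.span {x, y}).radical ∧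
      (Ideal.span {x * u, y * v, x * v + y * u}).radical =
        (Ideal.span {u, v} ⊓ Ideal.span {x, y}).radical := by
  set S : Ideal R := Ideal.span {x * u, y * v, x * v + y * u} with hS
  have hxu : x * u ∈ S := Ideal.subset_span (by simp)
  have hyv : y * v ∈ S := Ideal.subset_span (by simp)
  have hmix : x * v + y * u ∈ S := Ideal.subset_span (by simp)
  have hxuR : x * u ∈ S.radical := Ideal.le_radical hxu
  have hyvR : y * v ∈ S.radical := Ideal.le_radical hyv
  have hxvR : x * v ∈ S.radical := by
    refine ⟨2, ?_⟩
    have : (x * v) ^ 2 = (x * v) * (x * v + y * u) - (x * u) * (y * v) := by ring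
    rw [this]
    exact S.sub_mem (S.mul_mem_left _ hmix) (S.mul_mem_right _ hxu)
  have hyuR : y * u ∈ S.radical := by
    refine ⟨2, ?_⟩
    have : (y * u) ^ 2 = (y * u) * (x * v + y * u) - (x * u) * (y * v) := by ring
    rw [this]
    exact S.sub_mem (S.mul_mem_left _ hmix) (S.mul_mem_right _ hxu)
  have h1 : S.radical = (Ideal.span {u, v} * Ideal.span {x, y}).radical := by
    apply le_antisymm
    · apply Ideal.radical_mono
      rw [hS, Ideal.span_le]
      intro z hz
      simp only [Set.mem_insert_iff, Set.mem_singleton_iff] at hz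
      have hu : u ∈ Ideal.span {u, v} := Ideal.subset_span (by simp)
      have hv : v ∈ Ideal.span {u, v} := Ideal.subset_span (by simp)
      have hx : x ∈ Ideal.span {x, y} := Ideal.subset_span (by simp)
      have hy : y ∈ Ideal.span {x, y} := Ideal.subset_span (by simp)
      rcases hz with rfl | rfl | rfl
      · exact mul_comm x u ▸ Ideal.mul_mem_mul hu hx
      · exact mul_comm y v ▸ Ideal.mul_mem_mul hv hy
      · exact Ideal.add_mem _ (mul_comm x v ▸ Ideal.mul_mem_mul hv hx)
          (mul_comm y u ▸ Ideal.mul_mem_mul hu hy)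
    · rw [← Ideal.radical_idem S]
      apply Ideal.radical_mono
      rw [Ideal.mul_le]
      intro a ha b hb
      rw [Ideal.mem_span_pair] at ha hb
      obtain ⟨c, d, rfl⟩ := ha
      obtain ⟨e, f, rfl⟩ := hb
      have : (c * u + d * v) * (e * x + f * y) =
          (c * e) * (x * u) + (c * f) * (y * u) + (d * e) * (x * v) + (d * f) * (y * v) := by
        ring
      rw [this]
      exact Ideal.add_mem _ (Ideal.add_mem _ (Ideal.add_mem _
        (Ideal.mul_mem_left _ _ hxuR) (Ideal.mul_mem_left _ _ hyuR))
        (Ideal.mul_mem_left _ _ hxvR)) (Ideal.mul_mem_left _ _ hyvR)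
  exact ⟨h1, h1.trans (by rw [Ideal.radical_mul, Ideal.radical_inf])⟩
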